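/- arXiv:2401.02078 — 3 statements merged into one kernel-verified Lean document; each statement's English description precedes it below -/
import Mathlib

section
/- Let h ≥ 1, let m_0, m_1, …, m_h be positive real numbers, and let ℓ_0 = 2 and ℓ_1, …, ℓ_h be positive integers such that ℓ_{h−j} divides ℓ_{h−j+1} for 1 ≤ j ≤ h. For 1 ≤ j ≤ h let C_j be the column vector of length ℓ_{h−j+1}/ℓ_{h−j} with all entries equal to 1/√(m_{h−j} m_{h−j+1}), and let B_j be the ℓ_{h−j+1} × ℓ_{h−j} block diagonal matrix with ℓ_{h−j} copies of C_j on its diagonal. Let α_1, …, α_{h+1} be real numbers, let Ω' be the 2×2 matrix with diagonal entries α_{h+1} and off-diagonal entries 1/m_0, and let P be the block tridiagonal matrix with diagonal blocks α_1 I_{ℓ_h}, α_2 I_{ℓ_{h−1}}, …, α_h I_{ℓ_1}, Ω', superdiagonal blocks B_1, …, B_h and subdiagonal blocks B_1^T, …, B_h^T. Define β_1 = α_1 and β_j = α_j − (ℓ_{h−j+2}/ℓ_{h−j+1}) · 1/(m_{h−j+1} m_{h−j+2} β_{j−1}) for 2 ≤ j ≤ h+1. If β_j ≠ 0 for all j =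 1, …, h and β_{h+1} ≠ ±1/m_0, then det P = β_1^{ℓ_h} β_2^{ℓ_{h−1}} ⋯ β_h^{ℓ_1} (β_{h+1} + 1/m_0)(β_{h+1} − 1/m_0). -/
/-!
Block Gaussian elimination. Write `P = D_α + B + Bᵀ`, with `B` the superdiagonal part and
`D_γ` the block diagonal part with blocks `γ_j I` and, last, the `2 × 2` block with diagonal
`γ_{h+1}` and off-diagonal `1/m_0`. Then `P = (1 + Bᵀ D_β⁻¹) (D_β + B)`: the columns of `B_j` have
disjoint supports, each with `ℓ_{h-j+1}/ℓ_{h-j}` entries `1/√(m_{h-j} m_{h-j+1})`, so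
`B_jᵀ B_j = (ℓ_{h-j+1}/ℓ_{h-j}) / (m_{h-j} m_{h-j+1}) • I`, and the recursion defining `β` says
precisely that `D_β + Bᵀ D_β⁻¹ B = D_α`. Both factors are block triangular, so
`det P = det D_β`.
-/

open Matrix

/-- The index type of a block matrix with `h+1` diagonal blocks of sizes
`ℓ h, ℓ (h-1), …, ℓ 0` (from top to bottom). -/
abbrev BTidx (h : ℕ) (ℓ : ℕ → ℕ) : Type := (i : Fin (h + 1)) × Fin (ℓ (h - i.val))

/-- Entry `(a, b)` of the block `B_{i+1}` (of size `ℓ (h-i) × ℓ (h-i-1)`):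
the block diagonal matrix with `ℓ (h-i-1)` copies of the column vector of length
`ℓ (h-i) / ℓ (h-i-1)` with all entries `1/√(m (h-i-1) * m (h-i))` on its diagonal. -/
noncomputable def bEnt (h : ℕ) (ℓ : ℕ → ℕ) (m : ℕ → ℝ) (i a b : ℕ) : ℝ :=
  if a / (ℓ (h - i) / ℓ (h - i - 1)) = b then 1 / Real.sqrt (m (h - i - 1) * m (h - i)) else 0

/-- The block tridiagonal matrix `P` with diagonal blocks
`α 1 • I_{ℓ h}, α 2 • I_{ℓ (h-1)}, …, α h • I_{ℓ 1}, Ω'` (where `Ω'` is the `2 × 2`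
matrix with diagonal entries `α (h+1)` and off-diagonal entries `1 / m 0`; here
`ℓ 0 = 2`), superdiagonal blocks `B_1, …, B_h` and subdiagonal blocks
`B_1ᵀ, …, B_hᵀ`. -/
noncomputable def Pblk2 (h : ℕ) (ℓ : ℕ → ℕ) (m : ℕ → ℝ) (α : ℕ → ℝ) :
    Matrix (BTidx h ℓ) (BTidx h ℓ) ℝ :=
  fun p q =>
    if p.1.val = q.1.val then
      (if p.1.val = h then
        (if p.2.val = q.2.val then α (h + 1) else 1 / m 0)
      else if p.2.val = q.2.val then α (p.1.val + 1) else 0)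
    else if p.1.val + 1 = q.1.val then bEnt h ℓ m p.1.val p.2.val q.2.val
    else if q.1.val + 1 = p.1.val then bEnt h ℓ m q.1.val q.2.val p.2.val
    else 0

open Finset

namespace Matrix

variable {R : Type*} [CommRing R] {n α : Type*} [Fintype n] [DecidableEq n] [LinearOrder α]

theorem det_add_of_blockTriangular {A N : Matrix n n R} {b : n → α}
    (hA : A.BlockTriangular b) (hN : ∀ i j, b j ≤ b i → N i j = 0) :
    (A + N).det = A.det := by
  have hN' : N.BlockTriangular b := fun i j hij => hN i j hij.le
  rw [(hA.add hN').det, hA.det]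
  refine prod_congr rfl fun k _ => congrArg det ?_
  ext ⟨i, hi⟩ ⟨j, hj⟩
  simp [toSquareBlock_def, hN i j (hi.trans hj.symm).ge]

theorem BlockTriangular.det_sigma {ι : Type*} [Fintype ι] [LinearOrder ι] {κ : ι → Type*}
    [∀ i, Fintype (κ i)] [∀ i, DecidableEq (κ i)] {M : Matrix (Σ i, κ i) (Σ i, κ i) R}
    (hM : M.BlockTriangular Sigma.fst) :
    M.det = ∏ i, (of fun a b : κ i => M ⟨i, a⟩ ⟨i, b⟩).det := by
  rw [hM.det_fintype]
  refine prod_congr rfl fun i _ => ?_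
  rw [← det_reindex_self (Equiv.sigmaSubtype i)]
  rfl

theorem det_of_ite_eq_of_eq_two {n : ℕ} (hn : n = 2) (x y : R) :
    (of fun a b : Fin n => if a = b then x else y).det = (x + y) * (x - y) := by
  subst hn
  rw [det_fin_two]
  simp only [of_apply, ↓reduceIte, zero_ne_one, one_ne_zero]
  ring

end Matrix

theorem Finset.card_filter_range_mul_div_eq {r k b : ℕ} (hb : b < k) :
    #{a ∈ range (r * k) | a / r = b} = r := by
  rcases Nat.eq_zero_or_pos r with rfl | hr
  · simp
  have : {a ∈ range (r * k) | a / r = b} = Ico (b * r) (b * r + r) := by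
    ext a
    have hbk : b * r + r ≤ r * k := by nlinarith
    simp only [mem_filter, mem_range, mem_Ico, Nat.div_eq_iff hr]
    generalize b * r = t at *
    omega
  simp [this]

theorem Finset.sum_range_mul_ite_div_eq_mul_ite_div_eq {R : Type*} [CommRing R] {r k b b' : ℕ}
    (hb : b < k) (c : R) :
    ∑ a ∈ range (r * k), (if a / r = b then c else 0) * (if a / r = b' then c else 0) =
      if b = b' then r * c ^ 2 else 0 := by
  split_ifs with hbb
  · subst hbb
    have hsq (a : ℕ) : (if a / r = b then c else 0) * (if a / r = b then c else 0) =
        if a / r = b then c ^ 2 else 0 := by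
      split_ifs <;> ring
    simp only [hsq, ← sum_filter, sum_const, card_filter_range_mul_div_eq hb, nsmul_eq_mul]
  · refine sum_eq_zero fun a _ => ?_
    split_ifs <;> simp_all

theorem Finset.prod_Icc_one_eq_prod_fin {M : Type*} [CommMonoid M] (h : ℕ) (f : ℕ → M) :
    ∏ j ∈ Icc 1 h, f j = ∏ i : Fin h, f (i + 1) := by
  rw [Fin.prod_univ_eq_prod_range (fun i => f (i + 1)), ← Finset.Ico_add_one_right_eq_Icc,
    prod_Ico_eq_prod_range, Nat.add_sub_cancel]
  simp only [add_comm 1]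

section BlockTridiagonal

variable (h : ℕ) (ℓ : ℕ → ℕ) (m : ℕ → ℝ)

noncomputable def superdiagBlocks : Matrix (BTidx h ℓ) (BTidx h ℓ) ℝ :=
  of fun p q => if p.1.val + 1 = q.1.val then bEnt h ℓ m p.1 p.2 q.2 else 0

noncomputable def diagBlocks (γ : ℕ → ℝ) : Matrix (BTidx h ℓ) (BTidx h ℓ) ℝ :=
  blockDiagonal' fun i =>
    of fun a b => if a = b then γ (i + 1) else if i.val = h then 1 / m 0 else 0

-- Only the blocks `i < h` of the diagonal matter: the last block column of `superdiagBlocksᵀ`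
-- vanishes, so the junk value `(β (h + 1))⁻¹` is never used.
noncomputable def lowerFactor (β : ℕ → ℝ) : Matrix (BTidx h ℓ) (BTidx h ℓ) ℝ :=
  1 + (superdiagBlocks h ℓ m)ᵀ * diagonal fun r => (β (r.1 + 1))⁻¹

noncomputable def upperFactor (β : ℕ → ℝ) : Matrix (BTidx h ℓ) (BTidx h ℓ) ℝ :=
  diagBlocks h ℓ m β + superdiagBlocks h ℓ m

variable {h ℓ m}

theorem superdiagBlocks_apply_eq_zero {p q : BTidx h ℓ} (hpq : q.1 ≤ p.1) :
    superdiagBlocks h ℓ m p q = 0 :=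
  if_neg fun e => by have : q.1.val ≤ p.1.val := hpq; omega

theorem sum_superdiagBlocks_mul {p : BTidx h ℓ} {k : ℕ} (hk : p.1.val = k + 1)
    (f : BTidx h ℓ → ℝ) :
    ∑ r, superdiagBlocks h ℓ m r p * f r =
      ∑ x : Fin (ℓ (h - k)), bEnt h ℓ m k x p.2 * f ⟨⟨k, by have := p.1.isLt; omega⟩, x⟩ := by
  rw [Fintype.sum_sigma, sum_eq_single ⟨k, by have := p.1.isLt; omega⟩]
  · simp [superdiagBlocks, hk]
  · intro i _ hi
    refine sum_eq_zero fun x _ => ?_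
    have hne : i.val + 1 ≠ p.1.val := fun e => hi (Fin.ext (by simp; omega))
    rw [superdiagBlocks, of_apply, if_neg hne, zero_mul]
  · simp

theorem Pblk2_eq (α : ℕ → ℝ) :
    Pblk2 h ℓ m α = diagBlocks h ℓ m α + superdiagBlocks h ℓ m + (superdiagBlocks h ℓ m)ᵀ := by
  ext ⟨i, a⟩ ⟨j, b⟩
  by_cases hij : i = j
  · subst hij
    simp only [Pblk2, diagBlocks, superdiagBlocks, Matrix.add_apply, transpose_apply, of_apply,
      blockDiagonal'_apply_eq, Fin.val_inj]
    split_ifs <;> simp_all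
  · have hij' : i.val ≠ j.val := fun e => hij (Fin.ext e)
    simp only [Pblk2, diagBlocks, superdiagBlocks, Matrix.add_apply, transpose_apply, of_apply,
      blockDiagonal'_apply', dif_neg hij, if_neg hij']
    split_ifs <;> first | omega | simp

theorem sum_bEnt_mul_bEnt {i b b' : ℕ} (hdvd : ℓ (h - i - 1) ∣ ℓ (h - i))
    (hm : 0 ≤ m (h - i - 1) * m (h - i)) (hb : b < ℓ (h - i - 1)) :
    ∑ x : Fin (ℓ (h - i)), bEnt h ℓ m i x b * bEnt h ℓ m i x b' =
      if b = b' then (ℓ (h - i) : ℝ) / ℓ (h - i - 1) * (1 / (m (h - i - 1) * m (h - i)))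
      else 0 := by
  obtain ⟨r, hr⟩ := hdvd
  have hpos : 0 < ℓ (h - i - 1) := by omega
  have hratio : ℓ (h - i) / ℓ (h - i - 1) = r := by rw [hr, Nat.mul_div_cancel_left _ hpos]
  have hratio' : (ℓ (h - i) : ℝ) / ℓ (h - i - 1) = r := by
    rw [hr, Nat.cast_mul, mul_div_cancel_left₀ _ (by positivity)]
  simp only [bEnt, hratio]
  rw [Fin.sum_univ_eq_sum_range
      (fun a => (if a / r = b then _ else 0) * (if a / r = b' then _ else 0)),
    hratio', hr, mul_comm, sum_range_mul_ite_div_eq_mul_ite_div_eq hb, div_pow,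
    Real.sq_sqrt hm, one_pow]

theorem det_diagBlocks (hℓ0 : ℓ 0 = 2) (γ : ℕ → ℝ) :
    (diagBlocks h ℓ m γ).det =
      (∏ j ∈ Icc 1 h, γ j ^ ℓ (h + 1 - j)) * ((γ (h + 1) + 1 / m 0) * (γ (h + 1) - 1 / m 0)) := by
  rw [diagBlocks, (blockTriangular_blockDiagonal' _).det_sigma, Fin.prod_univ_castSucc,
    prod_Icc_one_eq_prod_fin]
  simp only [blockDiagonal'_apply_eq, of_apply, Fin.val_last, if_true]
  rw [det_of_ite_eq_of_eq_two (by simp [hℓ0])]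
  congr 1
  refine prod_congr rfl fun i _ => ?_
  simp only [Fin.val_castSucc, if_neg i.isLt.ne]
  rw [show h + 1 - (i + 1) = h - i by omega]
  exact (det_diagonal ..).trans (by simp)

theorem diagonal_inv_mul_diagBlocks_apply {β : ℕ → ℝ} {r : BTidx h ℓ} (hr : r.1.val ≠ h)
    (hβ : β (r.1 + 1) ≠ 0) (q : BTidx h ℓ) :
    (diagonal (fun r : BTidx h ℓ => (β (r.1 + 1))⁻¹) * diagBlocks h ℓ m β) r q =
      (1 : Matrix (BTidx h ℓ) (BTidx h ℓ) ℝ) r q := by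
  obtain ⟨i, a⟩ := r
  obtain ⟨j, b⟩ := q
  rw [diagonal_mul]
  by_cases hij : i = j
  · subst hij
    simp only [diagBlocks, blockDiagonal'_apply_eq, of_apply, if_neg hr, one_apply,
      Sigma.mk.inj_iff, heq_eq_eq, true_and]
    split_ifs <;> simp [hβ]
  · simp [diagBlocks, blockDiagonal'_apply', one_apply, hij]

theorem transpose_superdiagBlocks_mul_diagonal_inv_mul_diagBlocks {β : ℕ → ℝ}
    (hβ : ∀ j, 1 ≤ j → j ≤ h → β j ≠ 0) :
    (superdiagBlocks h ℓ m)ᵀ * diagonal (fun r : BTidx h ℓ => (β (r.1 + 1))⁻¹) *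
      diagBlocks h ℓ m β = (superdiagBlocks h ℓ m)ᵀ := by
  ext p q
  calc _ = ((superdiagBlocks h ℓ m)ᵀ * 1 : Matrix _ _ ℝ) p q := by
        rw [Matrix.mul_assoc, mul_apply, mul_apply]
        refine sum_congr rfl fun r _ => ?_
        by_cases hr : r.1.val = h
        · have := p.1.isLt
          rw [transpose_apply, superdiagBlocks_apply_eq_zero (Fin.le_def.mpr (by omega)),
            zero_mul, zero_mul]
        · have := r.1.isLt
          rw [diagonal_inv_mul_diagBlocks_apply hr (hβ _ (by omega) (by omega))]
    _ = _ := by rw [Matrix.mul_one]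

theorem diagBlocks_add_transpose_mul_diagonal_inv_mul_superdiagBlocks {α β : ℕ → ℝ}
    (hm : ∀ i, i ≤ h → 0 < m i) (hdvd : ∀ j, 1 ≤ j → j ≤ h → ℓ (h - j) ∣ ℓ (h - j + 1))
    (hβ1 : β 1 = α 1)
    (hβ : ∀ j, 2 ≤ j → j ≤ h + 1 →
      β j = α j - ((ℓ (h + 2 - j) : ℝ) / (ℓ (h + 1 - j) : ℝ)) *
        (1 / (m (h + 1 - j) * m (h + 2 - j) * β (j - 1)))) :
    diagBlocks h ℓ m β + (superdiagBlocks h ℓ m)ᵀ *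
      diagonal (fun r : BTidx h ℓ => (β (r.1 + 1))⁻¹) * superdiagBlocks h ℓ m =
      diagBlocks h ℓ m α := by
  ext ⟨i, a⟩ ⟨j, b⟩
  rw [Matrix.add_apply, mul_apply]
  simp only [mul_diagonal, transpose_apply]
  obtain hi | ⟨k, hk⟩ : i.val = 0 ∨ ∃ k, i.val = k + 1 :=
    (em _).imp_right Nat.exists_eq_add_one_of_ne_zero
  · rw [sum_eq_zero fun r _ => by
      rw [superdiagBlocks_apply_eq_zero (Fin.le_def.mpr (by dsimp only; omega)), zero_mul,
        zero_mul], add_zero]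
    by_cases hij : i = j
    · subst hij
      simp [diagBlocks, hi, hβ1]
    · simp [diagBlocks, blockDiagonal'_apply', hij]
  · simp_rw [mul_assoc]
    rw [sum_superdiagBlocks_mul (p := ⟨i, a⟩) hk]
    by_cases hij : i = j
    · subst hij
      have hkh : k + 1 ≤ h := by have := i.isLt; omega
      have hd : ℓ (h - k - 1) ∣ ℓ (h - k) := by
        convert hdvd (k + 1) (by omega) hkh using 2 <;> omega
      have ha : a.val < ℓ (h - k - 1) := a.isLt.trans_eq (congrArg ℓ (by omega))
      simp only [superdiagBlocks, of_apply, hk, if_true, mul_left_comm _ (β (k + 1))⁻¹, ← mul_sum]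
      rw [sum_bEnt_mul_bEnt hd (mul_pos (hm _ (by omega)) (hm _ (by omega))).le ha]
      have hβk := hβ (k + 1 + 1) (by omega) (by omega)
      simp only [show h + 2 - (k + 1 + 1) = h - k by omega,
        show h + 1 - (k + 1 + 1) = h - k - 1 by omega, Nat.add_sub_cancel] at hβk
      simp only [diagBlocks, blockDiagonal'_apply_eq, of_apply, hk, Fin.val_inj]
      split_ifs <;> first | (rw [hβk]; ring) | simp
    · have hkj : k + 1 ≠ j.val := fun e => hij (Fin.ext (hk.trans e))
      rw [sum_eq_zero fun x _ => by rw [superdiagBlocks, of_apply, if_neg hkj, mul_zero, mul_zero]]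
      simp [diagBlocks, blockDiagonal'_apply', hij]

theorem det_lowerFactor (β : ℕ → ℝ) : (lowerFactor h ℓ m β).det = 1 := by
  rw [← det_transpose, lowerFactor, transpose_add, transpose_one, transpose_mul,
    diagonal_transpose, transpose_transpose,
    det_add_of_blockTriangular (blockTriangular_one (b := Sigma.fst)), det_one]
  intro p q hpq
  rw [diagonal_mul, superdiagBlocks_apply_eq_zero hpq, mul_zero]

theorem det_upperFactor (β : ℕ → ℝ) :
    (upperFactor h ℓ m β).det = (diagBlocks h ℓ m β).det :=
  det_add_of_blockTriangular (blockTriangular_blockDiagonal' _) fun _ _ =>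
    superdiagBlocks_apply_eq_zero

theorem Pblk2_eq_lowerFactor_mul_upperFactor {α β : ℕ → ℝ}
    (hm : ∀ i, i ≤ h → 0 < m i) (hdvd : ∀ j, 1 ≤ j → j ≤ h → ℓ (h - j) ∣ ℓ (h - j + 1))
    (hβ1 : β 1 = α 1)
    (hβ : ∀ j, 2 ≤ j → j ≤ h + 1 →
      β j = α j - ((ℓ (h + 2 - j) : ℝ) / (ℓ (h + 1 - j) : ℝ)) *
        (1 / (m (h + 1 - j) * m (h + 2 - j) * β (j - 1))))
    (hne : ∀ j, 1 ≤ j → j ≤ h → β j ≠ 0) :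
    Pblk2 h ℓ m α = lowerFactor h ℓ m β * upperFactor h ℓ m β := by
  rw [Pblk2_eq, lowerFactor, upperFactor, add_mul, one_mul, mul_add,
    transpose_superdiagBlocks_mul_diagonal_inv_mul_diagBlocks hne,
    ← diagBlocks_add_transpose_mul_diagonal_inv_mul_superdiagBlocks hm hdvd hβ1 hβ]
  abel

end BlockTridiagonal

theorem stmt6_general (h : ℕ) (m : ℕ → ℝ) (hm : ∀ i, i ≤ h → 0 < m i)
    (ℓ : ℕ → ℕ) (hℓ0 : ℓ 0 = 2)
    (hdvd : ∀ j, 1 ≤ j → j ≤ h → ℓ (h - j) ∣ ℓ (h - j + 1))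
    (α : ℕ → ℝ) (β : ℕ → ℝ)
    (hβ1 : β 1 = α 1)
    (hβ : ∀ j, 2 ≤ j → j ≤ h + 1 →
      β j = α j - ((ℓ (h + 2 - j) : ℝ) / (ℓ (h + 1 - j) : ℝ)) *
        (1 / (m (h + 1 - j) * m (h + 2 - j) * β (j - 1))))
    (hne : ∀ j, 1 ≤ j → j ≤ h → β j ≠ 0) :
    (Pblk2 h ℓ m α).det =
      (∏ j ∈ Finset.Icc 1 h, β j ^ ℓ (h + 1 - j)) *
        ((β (h + 1) + 1 / m 0) * (β (h + 1) - 1 / m 0)) := by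
  rw [Pblk2_eq_lowerFactor_mul_upperFactor hm hdvd hβ1 hβ hne, det_mul, det_lowerFactor,
    det_upperFactor, det_diagBlocks hℓ0, one_mul]

theorem stmt6 (h : ℕ) (hh : 1 ≤ h) (m : ℕ → ℝ) (hm : ∀ i, i ≤ h → 0 < m i)
    (ℓ : ℕ → ℕ) (hℓ0 : ℓ 0 = 2) (hℓpos : ∀ i, i ≤ h → 0 < ℓ i)
    (hdvd : ∀ j, 1 ≤ j → j ≤ h → ℓ (h - j) ∣ ℓ (h - j + 1))
    (α : ℕ → ℝ) (β : ℕ → ℝ)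
    (hβ1 : β 1 = α 1)
    (hβ : ∀ j, 2 ≤ j → j ≤ h + 1 →
      β j = α j - ((ℓ (h + 2 - j) : ℝ) / (ℓ (h + 1 - j) : ℝ)) *
        (1 / (m (h + 1 - j) * m (h + 2 - j) * β (j - 1))))
    (hne : ∀ j, 1 ≤ j → j ≤ h → β j ≠ 0)
    (hne' : β (h + 1) ≠ 1 / m 0) (hne'' : β (h + 1) ≠ -(1 / m 0)) :
    (Pblk2 h ℓ m α).det =
      (∏ j ∈ Finset.Icc 1 h, β j ^ ℓ (h + 1 - j)) *
        ((β (h + 1) + 1 / m 0) * (β (h + 1) - 1 / m 0)) :=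
  stmt6_general h m hm ℓ hℓ0 hdvd α β hβ1 hβ hne
end

section
/- Let T^1_{m_0,m_1,…,m_{h−1}} be a level-wise regular tree with one root, let ψ = { j ∈ {1,…,h} : |L_{h−j+1}| > |L_{h−j}| }, and let φ_0, φ_1, …, φ_{h+1} be the associated polynomials. Then the set of eigenvalues of the Randić matrix R(T^1) equals (⋃_{j ∈ ψ} { λ ∈ ℝ : φ_j(λ) = 0 }) ∪ { λ ∈ ℝ : φ_{h+1}(λ) = 0 }. -/
open Matrix

/-- The Randić matrix of a finite simple graph. -/
noncomputable def randic {V : Type*} [Fintype V] [DecidableEq V]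
    (G : SimpleGraph V) [DecidableRel G.Adj] : Matrix V V ℝ :=
  fun u v => if G.Adj u v then 1 / Real.sqrt ((G.degree u : ℝ) * (G.degree v : ℝ)) else 0

/-!
Call a vector *level-shaped* if it has the form `v ↦ σ v * w (d v) * φ_{h - d v}(λ)`, where
`d v` is the depth of `v`, `w i` is the product of the Randić weights along a root path down to
level `i`, and `σ` vanishes at depths less than some `i₀`, is constant on every subtree hanging from
level `i₀` and sums to zero over the children of every vertex at level `i₀ - 1`. On such
vectors the eigenvalue equation of `R` is the three-term recurrence of the `φ_j`, with one
boundary condition: `φ_{h - i₀ + 1}(λ) = 0`. Taking `i₀ = 0` and `σ = 1` gives the roots of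
`φ_{h+1}`. Taking `σ = ±1` on the subtrees of two siblings at level `h - j + 1` gives the roots
of `φ_j`. This needs a vertex at level `h - j` with two children, which is the condition `j ∈ ψ`.

Conversely, induction from the leaves shows that every eigenvector `x` satisfies
`φ_{h-d+1}(λ) x_v = φ_{h-d}(λ) R_{v, parent v} x_{parent v}`. If `λ` is none of these roots,
this makes `x` vanish level by level from the root. When `φ_{h-i}(λ) = 0`, the index `h - i`
is not in `ψ`, so every vertex of level `i` has a single child, and the eigenvalue equation at
that vertex settles the case.
-/

open Finset

theorem Matrix.mem_spectrum_iff_exists_mulVec_eq_smul {K n : Type*} [Field K] [Fintype n]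
    [DecidableEq n] (A : Matrix n n K) (μ : K) :
    μ ∈ spectrum K A ↔ ∃ x : n → K, x ≠ 0 ∧ A *ᵥ x = μ • x := by
  rw [← spectrum_toLin', ← Module.End.hasEigenvalue_iff_mem_spectrum]
  constructor
  · intro hμ
    obtain ⟨x, hx⟩ := hμ.exists_hasEigenvector
    exact ⟨x, hx.2, by simpa using hx.apply_eq_smul⟩
  · rintro ⟨x, hx0, hx⟩
    exact Module.End.hasEigenvalue_of_hasEigenvector
      ⟨by simpa [Module.End.mem_eigenspace_iff] using hx, hx0⟩

namespace SimpleGraph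

noncomputable def edgeWeight (m : ℕ → ℕ) (i : ℕ) : ℝ := 1 / √((m i : ℝ) * (m (i + 1) : ℝ))

noncomputable def pathWeight (m : ℕ → ℕ) (i : ℕ) : ℝ := ∏ k ∈ range i, edgeWeight m k

lemma edgeWeight_sq (m : ℕ → ℕ) (i : ℕ) :
    edgeWeight m i ^ 2 = 1 / ((m i : ℝ) * (m (i + 1) : ℝ)) := by
  rw [edgeWeight, div_pow, one_pow, Real.sq_sqrt (by positivity)]

lemma pathWeight_succ (m : ℕ → ℕ) (i : ℕ) :
    pathWeight m (i + 1) = pathWeight m i * edgeWeight m i :=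
  prod_range_succ _ _

def numChildren (m : ℕ → ℕ) (i : ℕ) : ℕ := if i = 0 then m 0 else m i - 1

/-- The value `p j` stands for `φ_j(λ)`; level `i` of the tree carries `p (h - i)`. -/
def IsLevelRecurrence (h : ℕ) (m : ℕ → ℕ) (lam : ℝ) (p : ℕ → ℝ) : Prop :=
  ∀ i ≤ h, p (h - i + 1) = lam * p (h - i) - numChildren m i * edgeWeight m i ^ 2 * p (h - i - 1)

section Parent

variable {V : Type*} {G : SimpleGraph V} {r u v : V} {i₀ : ℕ} {m : ℕ → ℕ} {s : V → ℝ}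

lemma Connected.exists_adj_dist_add_one (hc : G.Connected) (hv : G.dist r v ≠ 0) :
    ∃ u, G.Adj v u ∧ G.dist r u + 1 = G.dist r v := by
  obtain ⟨p, hp⟩ := hc.exists_walk_length_eq_dist r v
  have hnil : ¬p.Nil := fun h => hv (hp ▸ Walk.length_eq_zero_iff.mpr h)
  have hadj := p.adj_penultimate hnil
  have hle : G.dist r p.penultimate ≤ G.dist r v - 1 := hp ▸ p.length_dropLast ▸ dist_le _
  have htri : G.dist r v ≤ G.dist r p.penultimate + 1 :=
    dist_eq_one_iff_adj.2 hadj ▸ hc.dist_triangle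
  exact ⟨p.penultimate, hadj.symm, by omega⟩

lemma IsTree.eq_of_adj_of_dist_add_one (ht : G.IsTree) {u₁ u₂ : V}
    (h₁ : G.Adj u₁ v) (hd₁ : G.dist r u₁ + 1 = G.dist r v)
    (h₂ : G.Adj u₂ v) (hd₂ : G.dist r u₂ + 1 = G.dist r v) : u₁ = u₂ := by
  have geodesic (u : V) (h : G.Adj u v) (hd : G.dist r u + 1 = G.dist r v) :
      ∃ p : G.Path r v, p.1.penultimate = u := by
    obtain ⟨q, hq⟩ := ht.connected.exists_walk_length_eq_dist r u
    exact ⟨⟨q.concat h, (q.concat h).isPath_of_length_eq_dist (by simp [hq, hd])⟩,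
      q.penultimate_concat h⟩
  obtain ⟨p₁, rfl⟩ := geodesic u₁ h₁ hd₁
  obtain ⟨p₂, rfl⟩ := geodesic u₂ h₂ hd₂
  rw [(ht.isAcyclic.subsingleton_path r v).elim p₁ p₂]

open Classical in
variable (G r) in
/-- The root, having no parent, is sent to itself. -/
noncomputable def parent (v : V) : V :=
  if h : ∃ u, G.Adj v u ∧ G.dist r u + 1 = G.dist r v then h.choose else v

lemma IsTree.adj_parent (ht : G.IsTree) (hv : G.dist r v ≠ 0) :
    G.Adj v (parent G r v) ∧ G.dist r (parent G r v) + 1 = G.dist r v := by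
  have h := ht.connected.exists_adj_dist_add_one hv
  rw [parent, dif_pos h]
  exact h.choose_spec

lemma IsTree.parent_eq (ht : G.IsTree) (hadj : G.Adj v u) (hd : G.dist r u + 1 = G.dist r v) :
    parent G r v = u := by
  obtain ⟨hadj', hd'⟩ := ht.adj_parent (r := r) (v := v) (by omega)
  exact ht.eq_of_adj_of_dist_add_one hadj'.symm hd' hadj.symm hd

variable (G r) in
noncomputable def ancestor (i : ℕ) (v : V) : V := (parent G r)^[G.dist r v - i] v

lemma ancestor_of_dist_eq {i : ℕ} (hv : G.dist r v = i) : ancestor G r i v = v := by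
  rw [ancestor, hv, Nat.sub_self, Function.iterate_zero_apply]

lemma IsTree.ancestor_parent (ht : G.IsTree) {i : ℕ} (hv : i < G.dist r v) :
    ancestor G r i (parent G r v) = ancestor G r i v := by
  have hd := (ht.adj_parent (r := r) (v := v) (by omega)).2
  rw [ancestor, ancestor, show G.dist r v - i = G.dist r (parent G r v) - i + 1 by omega,
    Function.iterate_succ_apply]

lemma IsTree.dist_ancestor (ht : G.IsTree) {i : ℕ} (hi : i ≤ G.dist r v) :
    G.dist r (ancestor G r i v) = i := by
  induction hk : G.dist r v - i generalizing v with
  | zero => rw [ancestor_of_dist_eq (by omega)]; omega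
  | succ k ih =>
    have hd := (ht.adj_parent (r := r) (v := v) (by omega)).2
    rw [← ht.ancestor_parent (by omega)]
    exact ih (by omega) (by omega)

variable (G r) in
noncomputable def subtreeExtend (i₀ : ℕ) (s : V → ℝ) (v : V) : ℝ :=
  if i₀ ≤ G.dist r v then s (ancestor G r i₀ v) else 0

lemma subtreeExtend_of_lt (hv : G.dist r v < i₀) : subtreeExtend G r i₀ s v = 0 :=
  if_neg (by omega)

lemma IsTree.subtreeExtend_parent (ht : G.IsTree) (hv : i₀ < G.dist r v) :
    subtreeExtend G r i₀ s (parent G r v) = subtreeExtend G r i₀ s v := by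
  have hd := (ht.adj_parent (r := r) (v := v) (by omega)).2
  rw [subtreeExtend, subtreeExtend, if_pos (by omega), if_pos (by omega), ht.ancestor_parent hv]

variable (G r m) in
noncomputable def parentTerm (x : V → ℝ) (v : V) : ℝ :=
  if G.dist r v = 0 then 0 else edgeWeight m (G.dist r v - 1) * x (parent G r v)

lemma parentTerm_eq_zero {x : V → ℝ} (hx : G.dist r v ≠ 0 → x (parent G r v) = 0) :
    parentTerm G r m x v = 0 := by
  unfold parentTerm
  split_ifs with hv
  exacts [rfl, by rw [hx hv, mul_zero]]

end Parent

section Children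

variable {V : Type*} [Fintype V] {G : SimpleGraph V} [DecidableRel G.Adj] {r u v : V}

variable (G r) in
noncomputable def children (v : V) : Finset V :=
  (G.neighborFinset v).filter (G.dist r · = G.dist r v + 1)

lemma mem_children : u ∈ children G r v ↔ G.Adj v u ∧ G.dist r u = G.dist r v + 1 := by
  simp [children]

lemma IsTree.mem_children_iff (ht : G.IsTree) :
    u ∈ children G r v ↔ G.dist r u ≠ 0 ∧ parent G r u = v := by
  rw [mem_children]
  constructor
  · rintro ⟨hadj, hd⟩
    exact ⟨by omega, ht.parent_eq hadj.symm hd.symm⟩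
  · rintro ⟨hu, rfl⟩
    have := ht.adj_parent hu
    exact ⟨this.1.symm, this.2.symm⟩

lemma IsTree.neighborFinset_eq_children (ht : G.IsTree) (hv : G.dist r v = 0) :
    G.neighborFinset v = children G r v := by
  ext u
  simp only [mem_children, mem_neighborFinset, iff_self_and]
  intro hadj
  rcases ht.dist_eq_dist_add_one_of_adj r hadj with h | h <;> omega

lemma IsTree.parent_notMem_children (ht : G.IsTree) (hv : G.dist r v ≠ 0) :
    parent G r v ∉ children G r v := by
  have := (ht.adj_parent hv).2
  rw [mem_children]
  omega

lemma IsTree.neighborFinset_eq_insert_parent [DecidableEq V] (ht : G.IsTree)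
    (hv : G.dist r v ≠ 0) : G.neighborFinset v = insert (parent G r v) (children G r v) := by
  ext u
  simp only [mem_insert, mem_children, mem_neighborFinset]
  constructor
  · intro hadj
    rcases ht.dist_eq_dist_add_one_of_adj r hadj with h | h
    · exact .inl (ht.parent_eq hadj h.symm).symm
    · exact .inr ⟨hadj, h⟩
  · rintro (rfl | ⟨hadj, -⟩)
    exacts [(ht.adj_parent hv).1, hadj]

lemma IsTree.degree_eq_card_children_add (ht : G.IsTree) (v : V) :
    G.degree v = #(children G r v) + if G.dist r v = 0 then 0 else 1 := by
  classical
  rw [← card_neighborFinset_eq_degree]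
  split_ifs with hv
  · rw [ht.neighborFinset_eq_children hv, add_zero]
  · rw [ht.neighborFinset_eq_insert_parent hv,
      card_insert_of_notMem (ht.parent_notMem_children hv)]

lemma sum_children_subtreeExtend_of_lt {i₀ : ℕ} {s : V → ℝ}
    (hs : ∀ w, G.dist r w + 1 = i₀ → ∑ u ∈ children G r w, s u = 0) (hv : G.dist r v < i₀) :
    ∑ u ∈ children G r v, subtreeExtend G r i₀ s u = 0 := by
  rcases Nat.lt_or_ge (G.dist r v + 1) i₀ with hlt | hge
  · exact sum_eq_zero fun u hu => subtreeExtend_of_lt (by rw [(mem_children.1 hu).2]; exact hlt)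
  · rw [← hs v (by omega)]
    refine sum_congr rfl fun u hu => ?_
    have hu := (mem_children.1 hu).2
    rw [subtreeExtend, if_pos (by omega), ancestor_of_dist_eq (by omega)]

end Children

section Levels

variable {V : Type*} [Fintype V] {G : SimpleGraph V} {r v : V} {i : ℕ}

variable (G r) in
noncomputable def level (i : ℕ) : Finset V := univ.filter (G.dist r · = i)

lemma mem_level : v ∈ level G r i ↔ G.dist r v = i := by simp [level]

lemma ncard_setOf_dist_eq (i : ℕ) : {v | G.dist r v = i}.ncard = #(level G r i) := by
  rw [← Set.ncard_coe_finset, level, coe_filter]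
  simp

end Levels

structure IsLevelRegular {V : Type*} [Fintype V] (G : SimpleGraph V) [DecidableRel G.Adj]
    (r : V) (h : ℕ) (m : ℕ → ℕ) : Prop where
  isTree : G.IsTree
  dist_le : ∀ v, G.dist r v ≤ h
  exists_dist_eq : ∃ v, G.dist r v = h
  degree_eq : ∀ v, G.degree v = m (G.dist r v)

variable {V : Type*} [Fintype V] {G : SimpleGraph V} [DecidableRel G.Adj] {r v w : V}
  {h i i₀ : ℕ} {m : ℕ → ℕ} {p : ℕ → ℝ} {lam : ℝ} {s x : V → ℝ}

variable (G r h m p) in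
noncomputable def levelVector (i₀ : ℕ) (s : V → ℝ) (v : V) : ℝ :=
  subtreeExtend G r i₀ s v * (pathWeight m (G.dist r v) * p (h - G.dist r v))

namespace IsLevelRegular

lemma card_children (hG : G.IsLevelRegular r h m) (v : V) :
    #(children G r v) = numChildren m (G.dist r v) := by
  have hdeg := hG.isTree.degree_eq_card_children_add (r := r) v
  rw [hG.degree_eq] at hdeg
  unfold numChildren
  split_ifs at hdeg ⊢ with hv
  · rw [← hv, hdeg, add_zero]
  · omega

lemma level_nonempty (hG : G.IsLevelRegular r h m) (hi : i ≤ h) : (level G r i).Nonempty := by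
  obtain ⟨v, hv⟩ := hG.exists_dist_eq
  exact ⟨ancestor G r i v, mem_level.2 (hG.isTree.dist_ancestor (hv ▸ hi))⟩

lemma card_level_succ (hG : G.IsLevelRegular r h m) (i : ℕ) :
    #(level G r (i + 1)) = #(level G r i) * numChildren m i := by
  have hmaps : ∀ v ∈ level G r (i + 1), parent G r v ∈ level G r i := by
    intro v hv
    rw [mem_level] at hv ⊢
    have := (hG.isTree.adj_parent (r := r) (v := v) (by omega)).2
    omega
  classical
  rw [card_eq_sum_card_fiberwise hmaps, sum_const_nat]
  intro w hw
  rw [← mem_level.1 hw, ← hG.card_children w]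
  congr 1
  ext u
  simp only [mem_filter, mem_level, hG.isTree.mem_children_iff]
  constructor
  · rintro ⟨hu, rfl⟩
    exact ⟨by omega, rfl⟩
  · rintro ⟨hu, rfl⟩
    have := (hG.isTree.adj_parent hu).2
    exact ⟨by omega, rfl⟩

lemma numChildren_height (hG : G.IsLevelRegular r h m) : numChildren m h = 0 := by
  obtain ⟨v, hv⟩ := hG.exists_dist_eq
  rw [← hv, ← hG.card_children, card_eq_zero, eq_empty_iff_forall_notMem]
  intro u hu
  have := hG.dist_le u
  rw [mem_children] at hu
  omega

lemma children_nonempty (hG : G.IsLevelRegular r h m) (hv : G.dist r v < h) :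
    (children G r v).Nonempty := by
  rw [← card_pos, hG.card_children]
  have hpos := (hG.level_nonempty (i := G.dist r v + 1) hv).card_pos
  rw [hG.card_level_succ] at hpos
  exact Nat.pos_of_mul_pos_left hpos

lemma exists_dist_eq_ancestor_eq (hG : G.IsLevelRegular r h m) (a : V) :
    ∃ v, G.dist r v = h ∧ ancestor G r (G.dist r a) v = a := by
  have descend : ∀ k ≤ h - G.dist r a,
      ∃ v, G.dist r v = G.dist r a + k ∧ ancestor G r (G.dist r a) v = a := by
    intro k
    induction k with
    | zero => exact fun _ => ⟨a, rfl, ancestor_of_dist_eq rfl⟩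
    | succ k ih =>
      intro hk
      obtain ⟨v, hv, hva⟩ := ih (by omega)
      obtain ⟨u, hu⟩ := hG.children_nonempty (v := v) (by omega)
      obtain ⟨hu0, rfl⟩ := hG.isTree.mem_children_iff.1 hu
      have hdu := (mem_children.1 hu).2
      exact ⟨u, by omega, by rw [← hG.isTree.ancestor_parent (by omega), hva]⟩
  obtain ⟨v, hv, hva⟩ := descend (h - G.dist r a) le_rfl
  have := hG.dist_le a
  exact ⟨v, by omega, hva⟩

lemma edgeWeight_ne_zero (hG : G.IsLevelRegular r h m) (hi : i < h) : edgeWeight m i ≠ 0 := by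
  obtain ⟨v, hv⟩ := hG.level_nonempty (i := i + 1) hi
  rw [mem_level] at hv
  obtain ⟨hadj, hd⟩ := hG.isTree.adj_parent (r := r) (v := v) (by omega)
  have hpar := hG.degree_eq (parent G r v)
  have hchild := hG.degree_eq v
  rw [show G.dist r (parent G r v) = i by omega] at hpar
  rw [hv] at hchild
  have h₁ : 0 < G.degree (parent G r v) := G.degree_pos_iff_exists_adj _ |>.2 ⟨v, hadj.symm⟩
  have h₂ : 0 < G.degree v := G.degree_pos_iff_exists_adj _ |>.2 ⟨_, hadj⟩
  have : (0 : ℝ) < m i := by exact_mod_cast hpar ▸ h₁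
  have : (0 : ℝ) < m (i + 1) := by exact_mod_cast hchild ▸ h₂
  exact one_div_ne_zero (Real.sqrt_ne_zero'.2 (by positivity))

lemma pathWeight_ne_zero (hG : G.IsLevelRegular r h m) (hi : i ≤ h) : pathWeight m i ≠ 0 :=
  prod_ne_zero_iff.2 fun k hk => hG.edgeWeight_ne_zero (by rw [mem_range] at hk; omega)

lemma sum_children_subtreeExtend (hG : G.IsLevelRegular r h m) (hv : i₀ ≤ G.dist r v) :
    ∑ u ∈ children G r v, subtreeExtend G r i₀ s u =
      numChildren m (G.dist r v) * subtreeExtend G r i₀ s v := by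
  rw [sum_congr rfl fun u hu => ?_, sum_const, hG.card_children, nsmul_eq_mul]
  obtain ⟨hu0, rfl⟩ := hG.isTree.mem_children_iff.1 hu
  exact hG.isTree.subtreeExtend_parent (by have := (mem_children.1 hu).2; omega) |>.symm

lemma parentTerm_levelVector (hG : G.IsLevelRegular r h m) (hroot : p (h - i₀ + 1) = 0)
    (hv : i₀ ≤ G.dist r v) :
    parentTerm G r m (levelVector G r h m p i₀ s) v =
      subtreeExtend G r i₀ s v * pathWeight m (G.dist r v) * p (h - G.dist r v + 1) := by
  rw [parentTerm]
  split_ifs with hv0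
  · obtain rfl : i₀ = 0 := by omega
    rw [Nat.sub_zero] at hroot
    rw [hv0, Nat.sub_zero, hroot, mul_zero]
  have hd := (hG.isTree.adj_parent hv0).2
  rcases hv.lt_or_eq with hlt | rfl
  · rw [levelVector, hG.isTree.subtreeExtend_parent hlt,
      show G.dist r (parent G r v) = G.dist r v - 1 by omega,
      show h - (G.dist r v - 1) = h - G.dist r v + 1 by have := hG.dist_le v; omega]
    conv_rhs => rw [show G.dist r v = G.dist r v - 1 + 1 by omega, pathWeight_succ]
    rw [show G.dist r v - 1 + 1 = G.dist r v by omega]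
    ring
  · rw [hroot, mul_zero, levelVector, subtreeExtend_of_lt (by omega)]
    ring

lemma levelVector_ne_zero (hG : G.IsLevelRegular r h m) (hp0 : p 0 ≠ 0) {a : V}
    (ha : G.dist r a = i₀) (hsa : s a ≠ 0) : levelVector G r h m p i₀ s ≠ 0 := by
  obtain ⟨v, hv, hva⟩ := hG.exists_dist_eq_ancestor_eq a
  intro hzero
  have := congrFun hzero v
  rw [levelVector, subtreeExtend, if_pos (by have := hG.dist_le a; omega), ← ha, hva, hv,
    Nat.sub_self, Pi.zero_apply] at this
  exact mul_ne_zero hsa (mul_ne_zero (hG.pathWeight_ne_zero le_rfl) hp0) this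

lemma ncard_lt_ncard_succ_iff (hG : G.IsLevelRegular r h m) (hi : i ≤ h) :
    {v | G.dist r v = i}.ncard < {v | G.dist r v = i + 1}.ncard ↔ 1 < numChildren m i := by
  rw [ncard_setOf_dist_eq, ncard_setOf_dist_eq, hG.card_level_succ]
  exact lt_mul_iff_one_lt_right (hG.level_nonempty hi).card_pos

lemma isLevelRecurrence (hG : G.IsLevelRegular r h m) {φ : ℕ → ℝ → ℝ}
    (hφ0 : ∀ x, φ 0 x = 1) (hφ1 : ∀ x, φ 1 x = x)
    (hφ : ∀ j, 2 ≤ j → j ≤ h + 1 → ∀ x, φ j x =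
      x * φ (j - 1) x -
        (({v : V | G.dist r v = h + 2 - j}.ncard : ℝ) /
          (({v : V | G.dist r v = h + 1 - j}.ncard : ℝ) *
            (m (h + 2 - j) : ℝ) * (m (h + 1 - j) : ℝ))) * φ (j - 2) x) (lam : ℝ) :
    IsLevelRecurrence h m lam (φ · lam) := by
  intro i hi
  dsimp only
  rcases hi.lt_or_eq with hi | rfl
  · have hN : (#(level G r i) : ℝ) ≠ 0 := by
      exact_mod_cast (hG.level_nonempty hi.le).card_pos.ne'
    rw [hφ (h - i + 1) (by omega) (by omega), show h + 2 - (h - i + 1) = i + 1 by omega,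
      show h + 1 - (h - i + 1) = i by omega, show h - i + 1 - 1 = h - i by omega,
      show h - i + 1 - 2 = h - i - 1 by omega, ncard_setOf_dist_eq, ncard_setOf_dist_eq,
      hG.card_level_succ, edgeWeight_sq, Nat.cast_mul, mul_assoc (#(level G r i) : ℝ),
      mul_div_mul_left _ _ hN]
    ring
  · rw [hG.numChildren_height, Nat.sub_self, hφ1, hφ0]
    simp

variable [DecidableEq V]

lemma randic_mulVec (hG : G.IsLevelRegular r h m) (x : V → ℝ) (v : V) :
    (randic G *ᵥ x) v =
      parentTerm G r m x v + edgeWeight m (G.dist r v) * ∑ u ∈ children G r v, x u := by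
  have hneighbors : (randic G *ᵥ x) v =
      ∑ u ∈ G.neighborFinset v, 1 / √((G.degree v : ℝ) * G.degree u) * x u := by
    simp only [Matrix.mulVec, dotProduct, randic, ite_mul, zero_mul, neighborFinset_eq_filter,
      sum_filter]
  have hchildren : ∑ u ∈ children G r v, 1 / √((G.degree v : ℝ) * G.degree u) * x u =
      edgeWeight m (G.dist r v) * ∑ u ∈ children G r v, x u := by
    rw [mul_sum]
    refine sum_congr rfl fun u hu => ?_
    rw [hG.degree_eq, hG.degree_eq, (mem_children.1 hu).2, edgeWeight]
  rw [hneighbors, parentTerm]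
  split_ifs with hv
  · rw [hG.isTree.neighborFinset_eq_children hv, hchildren, zero_add]
  · have hd := (hG.isTree.adj_parent hv).2
    rw [hG.isTree.neighborFinset_eq_insert_parent hv,
      sum_insert (hG.isTree.parent_notMem_children hv), hchildren]
    congr 1
    rw [hG.degree_eq, hG.degree_eq, edgeWeight, show G.dist r (parent G r v) = G.dist r v - 1 by
      omega, show G.dist r v - 1 + 1 = G.dist r v by omega, mul_comm (m (G.dist r v) : ℝ)]

lemma mul_apply_eq_mul_parentTerm (hG : G.IsLevelRegular r h m)
    (hrec : IsLevelRecurrence h m lam p) (hx : randic G *ᵥ x = lam • x) (v : V) :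
    p (h - G.dist r v + 1) * x v = p (h - G.dist r v) * parentTerm G r m x v := by
  induction hn : h - G.dist r v using Nat.strong_induction_on generalizing v with
  | _ n ih =>
  subst hn
  set d := G.dist r v
  have hd : d ≤ h := hG.dist_le v
  have hchild : ∀ u ∈ children G r v,
      p (h - d) * x u = edgeWeight m d * p (h - d - 1) * x v := by
    intro u hu
    obtain ⟨hu0, hpu⟩ := hG.isTree.mem_children_iff.1 hu
    have hdu : G.dist r u = d + 1 := (mem_children.1 hu).2
    have hu_le := hG.dist_le u
    have hu := ih (h - G.dist r u) (by omega) u rfl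
    rw [parentTerm, if_neg hu0, hpu, hdu, Nat.add_sub_cancel,
      show h - (d + 1) + 1 = h - d by omega, show h - (d + 1) = h - d - 1 by omega] at hu
    linear_combination hu
  have hsum : p (h - d) * ∑ u ∈ children G r v, x u =
      numChildren m d * edgeWeight m d * p (h - d - 1) * x v := by
    rw [mul_sum, sum_congr rfl hchild, sum_const, hG.card_children, nsmul_eq_mul]
    ring
  have heig := congrFun hx v
  rw [Pi.smul_apply, smul_eq_mul, hG.randic_mulVec] at heig
  linear_combination x v * hrec d hd - p (h - d) * heig + edgeWeight m d * hsum

lemma sum_children_eq_zero (hG : G.IsLevelRegular r h m) (hx : randic G *ᵥ x = lam • x)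
    (hw : G.dist r w < h) (hxw : x w = 0) (hpw : parentTerm G r m x w = 0) :
    ∑ u ∈ children G r w, x u = 0 := by
  have heig := congrFun hx w
  rw [Pi.smul_apply, smul_eq_mul, hG.randic_mulVec, hxw, hpw, mul_zero, zero_add] at heig
  exact (mul_eq_zero.1 heig).resolve_left (hG.edgeWeight_ne_zero hw)

lemma eq_zero_of_mulVec_eq_smul (hG : G.IsLevelRegular r h m)
    (hrec : IsLevelRecurrence h m lam p) (htop : p (h + 1) ≠ 0)
    (hbranch : ∀ j, 1 ≤ j → j ≤ h → 1 < numChildren m (h - j) → p j ≠ 0)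
    (hx : randic G *ᵥ x = lam • x) : x = 0 := by
  suffices ∀ i v, G.dist r v ≤ i → x v = 0 from funext fun v => this _ v le_rfl
  intro i
  induction i with
  | zero =>
    intro v hv
    have := hG.mul_apply_eq_mul_parentTerm hrec hx v
    rw [parentTerm, if_pos (by omega), show G.dist r v = 0 by omega, Nat.sub_zero,
      mul_zero] at this
    exact (mul_eq_zero.1 this).resolve_left htop
  | succ i ih =>
    intro v hv
    rcases Nat.lt_or_ge (G.dist r v) (i + 1) with hlt | hge
    · exact ih v (by omega)
    have hv0 : G.dist r v ≠ 0 := by omega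
    obtain ⟨hadj, hd⟩ := hG.isTree.adj_parent hv0
    have hih : i < h := by have := hG.dist_le v; omega
    have hxw : x (parent G r v) = 0 := ih _ (by omega)
    have htransfer := hG.mul_apply_eq_mul_parentTerm hrec hx v
    rw [parentTerm_eq_zero fun _ => hxw, mul_zero,
      show h - G.dist r v + 1 = h - i by omega] at htransfer
    by_cases hpi : p (h - i) = 0
    · have hK : numChildren m i ≤ 1 := not_lt.1 fun hK =>
        hbranch (h - i) (by omega) (by omega) (by rwa [Nat.sub_sub_self hih.le]) hpi
      have hvw : v ∈ children G r (parent G r v) := hG.isTree.mem_children_iff.2 ⟨hv0, rfl⟩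
      have hsingle : children G r (parent G r v) = {v} := by
        refine eq_singleton_iff_unique_mem.2 ⟨hvw, fun u hu => ?_⟩
        refine card_le_one.1 ?_ u hu v hvw
        rwa [hG.card_children, show G.dist r (parent G r v) = i by omega]
      have := hG.sum_children_eq_zero hx (w := parent G r v) (by omega) hxw
        (parentTerm_eq_zero fun hw0 => ih _ (by have := (hG.isTree.adj_parent hw0).2; omega))
      rwa [hsingle, sum_singleton] at this
    · exact (mul_eq_zero.1 htransfer).resolve_left hpi

lemma randic_mulVec_levelVector (hG : G.IsLevelRegular r h m)
    (hrec : IsLevelRecurrence h m lam p)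
    (hs : ∀ w, G.dist r w + 1 = i₀ → ∑ u ∈ children G r w, s u = 0)
    (hroot : p (h - i₀ + 1) = 0) :
    randic G *ᵥ levelVector G r h m p i₀ s = lam • levelVector G r h m p i₀ s := by
  funext v
  have hchildren : ∑ u ∈ children G r v, levelVector G r h m p i₀ s u =
      (∑ u ∈ children G r v, subtreeExtend G r i₀ s u) *
        (pathWeight m (G.dist r v + 1) * p (h - G.dist r v - 1)) := by
    rw [sum_mul]
    refine sum_congr rfl fun u hu => ?_
    rw [levelVector, (mem_children.1 hu).2, Nat.sub_add_eq]
  rw [hG.randic_mulVec, Pi.smul_apply, smul_eq_mul, hchildren]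
  rcases Nat.lt_or_ge (G.dist r v) i₀ with hlt | hge
  · rw [parentTerm_eq_zero fun hv0 => ?_, sum_children_subtreeExtend_of_lt hs hlt,
      levelVector, subtreeExtend_of_lt hlt]
    · ring
    · have := (hG.isTree.adj_parent hv0).2
      rw [levelVector, subtreeExtend_of_lt (by omega), zero_mul]
  · rw [hG.parentTerm_levelVector hroot hge, hG.sum_children_subtreeExtend hge, pathWeight_succ,
      levelVector]
    linear_combination subtreeExtend G r i₀ s v * pathWeight m (G.dist r v) *
      hrec (G.dist r v) (hG.dist_le v)

theorem mem_spectrum_randic_iff (hG : G.IsLevelRegular r h m) (hp0 : p 0 ≠ 0)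
    (hrec : IsLevelRecurrence h m lam p) :
    lam ∈ spectrum ℝ (randic G) ↔
      (∃ j, 1 ≤ j ∧ j ≤ h ∧ 1 < numChildren m (h - j) ∧ p j = 0) ∨ p (h + 1) = 0 := by
  rw [Matrix.mem_spectrum_iff_exists_mulVec_eq_smul]
  constructor
  · rintro ⟨x, hx0, hx⟩
    by_contra! hnot
    exact hx0 (hG.eq_zero_of_mulVec_eq_smul hrec hnot.2
      (fun j hj1 hjh hK => hnot.1 j hj1 hjh hK) hx)
  · rintro (⟨j, hj1, hjh, hK, hj⟩ | htop)
    · obtain ⟨w, hw⟩ := hG.level_nonempty (i := h - j) (by omega)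
      obtain ⟨a, ha, b, hb, hab⟩ := one_lt_card.1 (hG.card_children w ▸ (mem_level.1 hw) ▸ hK)
      have hda : G.dist r a = h - j + 1 := by rw [(mem_children.1 ha).2, mem_level.1 hw]
      have hsiblings : ∀ {u w'}, u ∈ children G r w → (u ∈ children G r w' ↔ w = w') := by
        intro u w' hu
        rw [hG.isTree.mem_children_iff] at hu ⊢
        exact ⟨fun h' => hu.2.symm.trans h'.2, fun h' => ⟨hu.1, h' ▸ hu.2⟩⟩
      refine ⟨levelVector G r h m p (h - j + 1) (Pi.single a 1 - Pi.single b 1),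
        hG.levelVector_ne_zero hp0 hda (by simp [hab.symm]),
        hG.randic_mulVec_levelVector hrec ?_ ?_⟩
      · intro w' _
        simp only [Pi.sub_apply, sum_sub_distrib, sum_pi_single', hsiblings ha, hsiblings hb,
          sub_self]
      · rwa [show h - (h - j + 1) + 1 = j by omega]
    · exact ⟨levelVector G r h m p 0 1, hG.levelVector_ne_zero hp0 (a := r) dist_self one_ne_zero,
        hG.randic_mulVec_levelVector hrec (fun w hw => by omega) (by rwa [Nat.sub_zero])⟩

end IsLevelRegular

end SimpleGraph

theorem stmt9_general {V : Type*} [Fintype V] [DecidableEq V]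
    (G : SimpleGraph V) [DecidableRel G.Adj] (r : V) (h : ℕ) (m : ℕ → ℕ)
    (htree : G.IsTree)
    (hheight : ∀ v, G.dist r v ≤ h)
    (hmax : ∃ v, G.dist r v = h)
    (hdeg : ∀ v, G.degree v = m (G.dist r v))
    (φ : ℕ → ℝ → ℝ)
    (hφ0 : ∀ x, φ 0 x = 1)
    (hφ1 : ∀ x, φ 1 x = x)
    (hφ : ∀ j, 2 ≤ j → j ≤ h + 1 → ∀ x, φ j x =
      x * φ (j - 1) x -
        (({v : V | G.dist r v = h + 2 - j}.ncard : ℝ) /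
          (({v : V | G.dist r v = h + 1 - j}.ncard : ℝ) *
            (m (h + 2 - j) : ℝ) * (m (h + 1 - j) : ℝ))) * φ (j - 2) x) :
    spectrum ℝ (randic G) =
      (⋃ j ∈ {j : ℕ | 1 ≤ j ∧ j ≤ h ∧
          {v : V | G.dist r v = h - j}.ncard < {v : V | G.dist r v = h - j + 1}.ncard},
        {lam : ℝ | φ j lam = 0}) ∪
      {lam : ℝ | φ (h + 1) lam = 0} := by
  have hG : G.IsLevelRegular r h m := ⟨htree, hheight, hmax, hdeg⟩
  ext lam
  rw [hG.mem_spectrum_randic_iff (p := (φ · lam)) (by simp [hφ0])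
    (hG.isLevelRecurrence hφ0 hφ1 hφ lam)]
  simp only [Set.mem_union, Set.mem_iUnion, Set.mem_ofPred_eq, exists_prop]
  refine or_congr_left (exists_congr fun j => ?_)
  constructor
  · rintro ⟨hj1, hjh, hK, hj⟩
    exact ⟨⟨hj1, hjh, (hG.ncard_lt_ncard_succ_iff (by omega)).2 hK⟩, hj⟩
  · rintro ⟨⟨hj1, hjh, hlt⟩, hj⟩
    exact ⟨hj1, hjh, (hG.ncard_lt_ncard_succ_iff (by omega)).1 hlt, hj⟩

theorem stmt9 {V : Type*} [Fintype V] [DecidableEq V]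
    (G : SimpleGraph V) [DecidableRel G.Adj] (r : V) (h : ℕ) (m : ℕ → ℕ)
    (hh : 1 ≤ h) (hm0 : 2 ≤ m 0)
    (htree : G.IsTree)
    (hheight : ∀ v, G.dist r v ≤ h)
    (hmax : ∃ v, G.dist r v = h)
    (hdeg : ∀ v, G.degree v = m (G.dist r v))
    (φ : ℕ → ℝ → ℝ)
    (hφ0 : ∀ x, φ 0 x = 1)
    (hφ1 : ∀ x, φ 1 x = x)
    (hφ : ∀ j, 2 ≤ j → j ≤ h + 1 → ∀ x, φ j x =
      x * φ (j - 1) x -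
        (({v : V | G.dist r v = h + 2 - j}.ncard : ℝ) /
          (({v : V | G.dist r v = h + 1 - j}.ncard : ℝ) *
            (m (h + 2 - j) : ℝ) * (m (h + 1 - j) : ℝ))) * φ (j - 2) x) :
    spectrum ℝ (randic G) =
      (⋃ j ∈ {j : ℕ | 1 ≤ j ∧ j ≤ h ∧
          {v : V | G.dist r v = h - j}.ncard < {v : V | G.dist r v = h - j + 1}.ncard},
        {lam : ℝ | φ j lam = 0}) ∪
      {lam : ℝ | φ (h + 1) lam = 0} :=
  stmt9_general G r h m htree hheight hmax hdeg φ hφ0 hφ1 hφ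
end

section
/- Let T^2_{m_0,m_1,…,m_{h−1}} be a level-wise regular tree with two roots. Then the largest eigenvalue of the Randić matrix R(T^2) equals 1, and 1 is an eigenvalue of the matrix P^2_{h+1}. -/
open Matrix

/-- The off-diagonal entry of the tridiagonal matrices `P^z_{h+1}` at (0-indexed)
position `(i, i+1)`. -/
noncomputable def odTwo (h : ℕ) (m : ℕ → ℝ) (i : ℕ) : ℝ :=
  Real.sqrt ((m (h - 1 - i) - 1) / (m (h - i) * m (h - 1 - i)))

/-- The `(h+1) × (h+1)` symmetric tridiagonal matrix `P^z_{h+1}`, `z = 1, 2`. -/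
noncomputable def Pz (h : ℕ) (m : ℕ → ℝ) (z : ℕ) : Matrix (Fin (h + 1)) (Fin (h + 1)) ℝ :=
  fun a b =>
    if a.val + 1 = b.val then odTwo h m a.val
    else if b.val + 1 = a.val then odTwo h m b.val
    else if a = b ∧ a.val = h then (-1 : ℝ) ^ z / m 0
    else 0

/-! The vector `√d` of square roots of degrees is fixed by the Randić matrix `R`, since every
vertex `v` receives `1 / √d_v` from each of its `d_v` neighbours. Conversely, if `R x = μ x`,
then at a vertex where `|x_v / √d_v|` is maximal the eigen-equation gives `|μ| ≤ 1`.

In the tree, a vertex of level `k` has one neighbour of level `k - 1` (the other root when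
`k = 0`) and `m_k - 1` of level `k + 1`, so it receives the fraction `1 / m_k` of its entry
`√d_v` through the first and `(m_k - 1) / m_k` through the others. Collecting `√d` level by
level therefore gives an eigenvector of `P^2_{h+1}` for the eigenvalue `1`: the diagonal entry
`1 / m_0` plays the role of the edge between the roots, and level `h` needs no neighbours
further out because its vertices are leaves (`m_h = 1`).
-/

open Finset

namespace Matrix

theorem mem_spectrum_iff_exists_mulVec_eq_smul_s14 {n K : Type*} [Fintype n] [DecidableEq n]
    [Field K] {A : Matrix n n K} {μ : K} :
    μ ∈ spectrum K A ↔ ∃ x ≠ 0, A *ᵥ x = μ • x := by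
  rw [← spectrum_toLin', ← Module.End.hasEigenvalue_iff_mem_spectrum]
  constructor
  · intro hμ
    obtain ⟨x, hx⟩ := hμ.exists_hasEigenvector
    exact ⟨x, hx.2, Module.End.mem_eigenspace_iff.1 hx.1⟩
  · rintro ⟨x, hx0, hx⟩
    exact Module.End.hasEigenvalue_of_hasEigenvector ⟨Module.End.mem_eigenspace_iff.2 hx, hx0⟩

end Matrix

section Randic

variable {V : Type*} [Fintype V] [DecidableEq V] (G : SimpleGraph V) [DecidableRel G.Adj]

theorem randic_mulVec_sqrt_degree_mul (z : V → ℝ) (u : V) :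
    (randic G *ᵥ fun v => √(G.degree v) * z v) u =
      (∑ v ∈ G.neighborFinset u, z v) / √(G.degree u) := by
  rw [mulVec, dotProduct, SimpleGraph.neighborFinset_eq_filter, sum_filter, sum_div]
  refine sum_congr rfl fun v _ => ?_
  by_cases huv : G.Adj u v
  · have hv : √(G.degree v) ≠ 0 := (Real.sqrt_pos.2 (by exact_mod_cast huv.degree_pos_right)).ne'
    simp only [randic, huv, if_true, Real.sqrt_mul (Nat.cast_nonneg _)]
    field_simp
  · simp [randic, huv]

theorem randic_mulVec_sqrt_degree :
    randic G *ᵥ (fun v => √(G.degree v)) = fun v => √(G.degree v) := by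
  funext u
  simpa [SimpleGraph.card_neighborFinset_eq_degree, Real.div_sqrt] using
    randic_mulVec_sqrt_degree_mul G 1 u

theorem one_mem_spectrum_randic {v : V} (hv : 0 < G.degree v) : 1 ∈ spectrum ℝ (randic G) :=
  Matrix.mem_spectrum_iff_exists_mulVec_eq_smul_s14.2
    ⟨_, Function.ne_iff.2 ⟨v, (Real.sqrt_pos.2 (Nat.cast_pos.2 hv)).ne'⟩,
      by rw [one_smul, randic_mulVec_sqrt_degree]⟩

theorem abs_le_one_of_mem_spectrum_randic (hd : ∀ v, 0 < G.degree v) {μ : ℝ}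
    (hμ : μ ∈ spectrum ℝ (randic G)) : |μ| ≤ 1 := by
  obtain ⟨x, hx0, hx⟩ := Matrix.mem_spectrum_iff_exists_mulVec_eq_smul_s14.1 hμ
  have hsqrt : ∀ v, 0 < √(G.degree v) := fun v => Real.sqrt_pos.2 (by exact_mod_cast hd v)
  set z : V → ℝ := fun v => x v / √(G.degree v)
  have hxz : x = fun v => √(G.degree v) * z v :=
    funext fun v => (mul_div_cancel₀ _ (hsqrt v).ne').symm
  obtain ⟨v₀, hv₀⟩ := Function.ne_iff.1 hx0
  obtain ⟨u, -, hu⟩ := exists_max_image univ (fun v => |z v|) ⟨v₀, mem_univ _⟩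
  have hzu : 0 < |z u| := by
    refine lt_of_lt_of_le (abs_pos.2 ?_) (hu v₀ (mem_univ _))
    simpa [z, (hsqrt v₀).ne'] using hv₀
  have hdu : (0 : ℝ) < G.degree u := by exact_mod_cast hd u
  have heig : μ * z u * G.degree u = ∑ v ∈ G.neighborFinset u, z v := by
    have := congrFun hx u
    rw [hxz, randic_mulVec_sqrt_degree_mul, Pi.smul_apply, smul_eq_mul,
      div_eq_iff (hsqrt u).ne'] at this
    rw [this]
    linear_combination -(μ * z u) * Real.mul_self_sqrt (Nat.cast_nonneg (α := ℝ) (G.degree u))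
  have : |μ| * (|z u| * G.degree u) ≤ 1 * (|z u| * G.degree u) :=
    calc |μ| * (|z u| * G.degree u) = |∑ v ∈ G.neighborFinset u, z v| := by
          rw [← heig, abs_mul, abs_mul, abs_of_pos hdu, mul_assoc]
      _ ≤ ∑ v ∈ G.neighborFinset u, |z v| := abs_sum_le_sum_abs _ _
      _ ≤ ∑ v ∈ G.neighborFinset u, |z u| := sum_le_sum fun v _ => hu v (mem_univ v)
      _ = 1 * (|z u| * G.degree u) := by
          rw [sum_const, SimpleGraph.card_neighborFinset_eq_degree, nsmul_eq_mul]; ring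
  exact le_of_mul_le_mul_right this (mul_pos hzu hdu)

theorem isGreatest_spectrum_randic [Nonempty V] (hd : ∀ v, 0 < G.degree v) :
    IsGreatest (spectrum ℝ (randic G)) 1 :=
  ⟨one_mem_spectrum_randic G (hd (Classical.arbitrary V)),
    fun _ hμ => (le_abs_self _).trans (abs_le_one_of_mem_spectrum_randic G hd hμ)⟩

end Randic

section Pz

variable (h : ℕ) (m : ℕ → ℝ)

theorem Pz_apply (z : ℕ) (a b : Fin (h + 1)) :
    Pz h m z a b =
      (if (a : ℕ) + 1 = b then odTwo h m a else 0) +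
      (if (b : ℕ) + 1 = a then odTwo h m b else 0) +
      (if (a : ℕ) = h ∧ (b : ℕ) = h then (-1) ^ z / m 0 else 0) := by
  unfold Pz
  split_ifs <;> simp_all [Fin.ext_iff] <;> omega

theorem Pz_mulVec_apply (z : ℕ) (y : ℕ → ℝ) (a : Fin (h + 1)) :
    (Pz h m z *ᵥ fun b => y b) a =
      (if (a : ℕ) < h then odTwo h m a * y (a + 1) else 0) +
      (if 0 < (a : ℕ) then odTwo h m (a - 1) * y (a - 1) else 0) +
      (if (a : ℕ) = h then (-1) ^ z / m 0 * y h else 0) := by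
  have hpred : ∀ j : ℕ, j + 1 = (a : ℕ) ↔ 0 < (a : ℕ) ∧ a - 1 = j := fun j => by omega
  simp only [mulVec, dotProduct, Pz_apply, add_mul, ite_mul, zero_mul, sum_add_distrib]
  rw [Fin.sum_univ_eq_sum_range (fun j => if (a : ℕ) + 1 = j then odTwo h m a * y j else 0),
    Fin.sum_univ_eq_sum_range (fun j => if j + 1 = (a : ℕ) then odTwo h m j * y j else 0),
    Fin.sum_univ_eq_sum_range (fun j => if (a : ℕ) = h ∧ j = h then (-1) ^ z / m 0 * y j else 0)]
  simp only [hpred, ite_and, sum_ite_eq, sum_ite_eq', sum_ite_irrel, sum_const_zero, mem_range,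
    show (a : ℕ) - 1 < h + 1 by omega, if_true, Nat.add_lt_add_iff_right, Nat.lt_add_one]

/-- Row `a` of `Pz h m z` belongs to level `h - a`; `levelCoupling m k` is the entry between the
rows of levels `k` and `k + 1`, and `levelVector m k` is, up to a common factor, the norm of `√d`
restricted to level `k`. -/
noncomputable def levelCoupling (k : ℕ) : ℝ :=
  √((m k - 1) / (m (k + 1) * m k))

theorem odTwo_eq_levelCoupling {a : ℕ} (ha : a < h) :
    odTwo h m a = levelCoupling m (h - 1 - a) := by
  rw [odTwo, levelCoupling, show h - 1 - a + 1 = h - a by omega]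

noncomputable def levelVector : ℕ → ℝ
  | 0 => 1
  | k + 1 => m (k + 1) * levelCoupling m k * levelVector k

variable {m}

theorem levelCoupling_mul_levelVector {k : ℕ} (hk : m (k + 1) ≠ 0) :
    levelCoupling m k * levelVector m k = levelVector m (k + 1) / m (k + 1) := by
  rw [levelVector]
  field_simp

theorem levelCoupling_mul_levelVector_succ {k : ℕ} (hk : 1 ≤ m k) (hk' : 0 < m (k + 1)) :
    levelCoupling m k * levelVector m (k + 1) = (m k - 1) / m k * levelVector m k := by
  have hsq : levelCoupling m k ^ 2 = (m k - 1) / (m (k + 1) * m k) :=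
    Real.sq_sqrt (div_nonneg (by linarith) (by positivity))
  calc levelCoupling m k * levelVector m (k + 1)
      = m (k + 1) * levelCoupling m k ^ 2 * levelVector m k := by rw [levelVector]; ring
    _ = (m k - 1) / m k * levelVector m k := by
      rw [hsq]
      field_simp

theorem Pz_two_mulVec_levelVector (hm : ∀ k ≤ h, 1 ≤ m k) (hmh : m h = 1) :
    (Pz h m 2 *ᵥ fun b : Fin (h + 1) => levelVector m (h - b)) =
      fun b : Fin (h + 1) => levelVector m (h - b) := by
  funext a
  have ha := a.isLt
  have hpos : ∀ k ≤ h, 0 < m k := fun k hk => zero_lt_one.trans_le (hm k hk)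
  rw [Pz_mulVec_apply h m 2 fun j => levelVector m (h - j)]
  set L := h - (a : ℕ) with hL
  have hmL : m L ≠ 0 := (hpos L (by omega)).ne'
  have hup : ((if (a : ℕ) < h then odTwo h m a * levelVector m (h - (a + 1)) else 0) +
      if (a : ℕ) = h then (-1) ^ 2 / m 0 * levelVector m (h - h) else 0) =
      levelVector m L / m L := by
    rcases Nat.lt_or_ge (a : ℕ) h with hah | hah
    · rw [if_pos hah, if_neg hah.ne, add_zero, odTwo_eq_levelCoupling h m hah,
        show h - (a + 1) = h - 1 - a by omega,
        levelCoupling_mul_levelVector (by rwa [show h - 1 - a + 1 = L by omega]),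
        show h - 1 - a + 1 = L by omega]
    · have hah : (a : ℕ) = h := by omega
      rw [if_neg hah.not_lt, if_pos hah, zero_add, Nat.sub_self, show L = 0 by omega]
      ring
  have hdown : (if 0 < (a : ℕ) then odTwo h m (a - 1) * levelVector m (h - (a - 1)) else 0) =
      (m L - 1) / m L * levelVector m L := by
    rcases Nat.eq_zero_or_pos (a : ℕ) with ha0 | ha0
    · rw [if_neg ha0.not_gt, show L = h by omega, hmh]
      ring
    · rw [if_pos ha0, odTwo_eq_levelCoupling h m (by omega), show h - 1 - (a - 1) = L by omega,
        show h - (a - 1) = L + 1 by omega,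
        levelCoupling_mul_levelVector_succ (hm L (by omega)) (hpos _ (by omega))]
  calc _ = levelVector m L / m L + (m L - 1) / m L * levelVector m L := by
        rw [← hup, ← hdown]; ring
    _ = levelVector m L := by field_simp; ring

theorem one_mem_spectrum_Pz_two (hm : ∀ k ≤ h, 1 ≤ m k) (hmh : m h = 1) :
    1 ∈ spectrum ℝ (Pz h m 2) := by
  refine Matrix.mem_spectrum_iff_exists_mulVec_eq_smul_s14.2
    ⟨_, Function.ne_iff.2 ⟨Fin.last h, ?_⟩, by rw [one_smul, Pz_two_mulVec_levelVector h hm hmh]⟩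
  simp [levelVector]

end Pz

namespace SimpleGraph

variable {V : Type*} {G : SimpleGraph V}

theorem Connected.exists_dist_eq_of_le_dist (hG : G.Connected) {a b : V} {n : ℕ}
    (hn : n ≤ G.dist a b) : ∃ u, G.dist a u = n ∧ G.dist u b = G.dist a b - n := by
  obtain ⟨p, hp⟩ := hG.exists_walk_length_eq_dist a b
  have hleft : G.dist a (p.getVert n) ≤ n := (dist_le (p.take n)).trans (by simp [Walk.take_length])
  have hright : G.dist (p.getVert n) b ≤ G.dist a b - n :=
    (dist_le (p.drop n)).trans (by rw [Walk.drop_length, hp])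
  have := hG.dist_triangle (u := a) (v := p.getVert n) (w := b)
  exact ⟨p.getVert n, by omega, by omega⟩

theorem IsTree.eq_of_adj_of_dist_lt (hG : G.IsTree) (a : V) {v w₁ w₂ : V} (h₁ : G.Adj w₁ v)
    (h₂ : G.Adj w₂ v) (hw₁ : G.dist a w₁ < G.dist a v) (hw₂ : G.dist a w₂ < G.dist a v) :
    w₁ = w₂ := by
  have hd₁ := hG.dist_eq_dist_add_one_of_adj a h₁
  have hd₂ := hG.dist_eq_dist_add_one_of_adj a h₂
  obtain ⟨p₁, hp₁⟩ := hG.connected.exists_walk_length_eq_dist a w₁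
  obtain ⟨p₂, hp₂⟩ := hG.connected.exists_walk_length_eq_dist a w₂
  -- both `p₁.concat h₁` and `p₂.concat h₂` are geodesics, hence the unique path from `a` to `v`
  have hq₁ : (p₁.concat h₁).IsPath := (p₁.concat h₁).isPath_of_length_eq_dist (by simp; omega)
  have hq₂ : (p₂.concat h₂).IsPath := (p₂.concat h₂).isPath_of_length_eq_dist (by simp; omega)
  have heq := (hG.isAcyclic.subsingleton_path a v).elim ⟨_, hq₁⟩ ⟨_, hq₂⟩
  exact (Walk.concat_inj (Subtype.mk.inj heq)).1

theorem IsTree.degree_le_one_of_forall_adj_dist_lt (hG : G.IsTree) (a : V) {v : V}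
    [Fintype (G.neighborSet v)] (h : ∀ w, G.Adj v w → G.dist a w < G.dist a v) :
    G.degree v ≤ 1 := by
  rw [← card_neighborFinset_eq_degree, Finset.card_le_one]
  intro w₁ hw₁ w₂ hw₂
  rw [mem_neighborFinset] at hw₁ hw₂
  exact hG.eq_of_adj_of_dist_lt a hw₁.symm hw₂.symm (h _ hw₁) (h _ hw₂)

variable {r r' v : V} {h : ℕ}

theorem IsTree.degree_le_one_of_min_dist_eq_height (hG : G.IsTree) [Fintype (G.neighborSet v)]
    (hadj : G.Adj r r') (hheight : ∀ u, min (G.dist r u) (G.dist r' u) ≤ h)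
    (hv : min (G.dist r v) (G.dist r' v) = h) : G.degree v ≤ 1 := by
  wlog hle : G.dist r v ≤ G.dist r' v generalizing r r'
  · exact this hadj.symm (fun u => min_comm (G.dist r u) _ ▸ hheight u)
      (min_comm (G.dist r v) _ ▸ hv) (by omega)
  -- each neighbour is within `h` of `r'`: by the height bound if it is farther from `r` than `v`,
  -- through `r` otherwise
  refine hG.degree_le_one_of_forall_adj_dist_lt r' fun w hw => ?_
  have hstep := hG.dist_eq_dist_add_one_of_adj r hw
  have hne := hG.dist_ne_of_adj r' hw
  have htri := hG.connected.dist_triangle (u := r') (v := r) (w := w)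
  have hrr' : G.dist r' r = 1 := dist_eq_one_iff_adj.2 hadj.symm
  have := hheight w
  omega

theorem Connected.exists_min_dist_eq (hG : G.Connected)
    (hv : min (G.dist r v) (G.dist r' v) = h) {n : ℕ} (hn : n ≤ h) :
    ∃ u, min (G.dist r u) (G.dist r' u) = n := by
  wlog hle : G.dist r v ≤ G.dist r' v generalizing r r'
  · obtain ⟨u, hu⟩ := this (min_comm (G.dist r v) _ ▸ hv) (by omega)
    exact ⟨u, min_comm (G.dist r u) _ ▸ hu⟩
  obtain ⟨u, hru, huv⟩ := hG.exists_dist_eq_of_le_dist (a := r) (b := v) (by omega : n ≤ G.dist r v)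
  have := hG.dist_triangle (u := r') (v := u) (w := v)
  exact ⟨u, by omega⟩

end SimpleGraph

theorem stmt14_general {V : Type*} [Fintype V] [DecidableEq V]
    (G : SimpleGraph V) [DecidableRel G.Adj] (r r' : V) (h : ℕ) (m : ℕ → ℕ)
    (hadj : G.Adj r r')
    (htree : G.IsTree)
    (hheight : ∀ v, min (G.dist r v) (G.dist r' v) ≤ h)
    (hmax : ∃ v, min (G.dist r v) (G.dist r' v) = h)
    (hdeg : ∀ v, G.degree v = m (min (G.dist r v) (G.dist r' v))) :
    IsGreatest (spectrum ℝ (randic G)) 1 ∧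
    (1 : ℝ) ∈ spectrum ℝ (Pz h (fun i => (m i : ℝ)) 2) := by
  have : Nontrivial V := nontrivial_of_ne r r' hadj.ne
  have hpos : ∀ v, 0 < G.degree v := fun v =>
    htree.connected.preconnected.degree_pos_of_nontrivial v
  obtain ⟨v, hv⟩ := hmax
  have hleaf : m h = 1 := by
    have hdv : G.degree v = m h := by rw [hdeg, hv]
    have := htree.degree_le_one_of_min_dist_eq_height hadj hheight hv
    have := hpos v
    omega
  have hlevel : ∀ k ≤ h, (1 : ℝ) ≤ m k := fun k hk => by
    obtain ⟨u, hu⟩ := htree.connected.exists_min_dist_eq hv hk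
    have := hpos u
    rw [hdeg u, hu] at this
    exact_mod_cast this
  exact ⟨isGreatest_spectrum_randic G hpos,
    one_mem_spectrum_Pz_two h hlevel (by exact_mod_cast hleaf)⟩

theorem stmt14 {V : Type*} [Fintype V] [DecidableEq V]
    (G : SimpleGraph V) [DecidableRel G.Adj] (r r' : V) (h : ℕ) (m : ℕ → ℕ)
    (hh : 1 ≤ h) (hm0 : 3 ≤ m 0)
    (hrr' : r ≠ r') (hadj : G.Adj r r')
    (htree : G.IsTree)
    (hheight : ∀ v, min (G.dist r v) (G.dist r' v) ≤ h)
    (hmax : ∃ v, min (G.dist r v) (G.dist r' v) = h)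
    (hdeg : ∀ v, G.degree v = m (min (G.dist r v) (G.dist r' v))) :
    IsGreatest (spectrum ℝ (randic G)) 1 ∧
    (1 : ℝ) ∈ spectrum ℝ (Pz h (fun i => (m i : ℝ)) 2) :=
  stmt14_general G r r' h m hadj htree hheight hmax hdeg
end
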